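/- Let (n_k)_{k≥1} be a lacunary sequence of positive integers, let (c_{k,N})_{1≤k≤N} satisfy Assumption (A2), and assume Assumption (A4) holds. Then for every mean-zero trigonometric polynomial p(x) = Σ_{j=1}^d [a_j cos(2πjx) + b_j sin(2πjx)], one has ‖Σ_{k≤N} c_{k,N} p(n_k x)‖₂² = ‖p‖₂²·h(N)·(1 + o(1)) as N → ∞; in particular ‖Σ_{k≤N} c_{k,N} p(n_k x)‖₂²/h(N) → ‖p‖₂² = (1/2)·Σ_{j=1}^d (a_j² + b_j²). -/

import Mathlib

open MeasureTheory Filter Real Set Finset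
open scoped Topology

/-- A sequence of positive integers is lacunary: liminf n_{k+1}/n_k ≥ q for some q > 1. -/
def IsLacunary (n : ℕ → ℕ) : Prop :=
  ∃ q : ℝ, 1 < q ∧ ∀ r : ℝ, r < q → ∀ᶠ k in Filter.atTop, r * (n k : ℝ) ≤ (n (k + 1) : ℝ)

/-- The mean-zero trigonometric polynomial p(x) = Σ_{j=1}^d (a_j cos(2πjx) + b_j sin(2πjx)). -/
noncomputable def trigPoly (d : ℕ) (a b : ℕ → ℝ) (x : ℝ) : ℝ :=
  ∑ j ∈ Finset.Icc 1 d,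
    (a j * Real.cos (2 * Real.pi * j * x) + b j * Real.sin (2 * Real.pi * j * x))

/-!
Expanding the square and integrating term by term, `∫₀¹ p(n_k x) p(n_l x) dx` equals
`∑_{j, j'} [j n_k = j' n_l] (a_j a_{j'} + b_j b_{j'}) / 2` by orthogonality of `cos (2π m x)` and
`sin (2π m x)`. The diagonal `k = l` thus contributes exactly `‖p‖₂² h(N)`, and each off-diagonal
term is at most a constant times the number of solutions of `j n_k = j' n_l`, so the off-diagonal
part is bounded by a multiple of the homogeneous part of `L*(N, d)`, which is `o(h(N))`.
-/

lemma integral_cos_two_pi_int_mul (r : ℤ) :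
    ∫ x in (0 : ℝ)..1, cos (2 * π * r * x) = if r = 0 then 1 else 0 := by
  split_ifs with hr
  · simp [hr]
  · have h2πr : 2 * π * r ≠ 0 := by positivity
    rw [intervalIntegral.integral_comp_mul_left _ h2πr, integral_cos, mul_one, mul_zero, sin_zero,
      sub_zero, show 2 * π * r = ((2 * r : ℤ) : ℝ) * π by push_cast; ring, sin_int_mul_pi,
      smul_zero]

lemma integral_sin_two_pi_int_mul (r : ℤ) :
    ∫ x in (0 : ℝ)..1, sin (2 * π * r * x) = 0 := by
  rcases eq_or_ne r 0 with hr | hr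
  · simp [hr]
  · have h2πr : 2 * π * r ≠ 0 := by positivity
    rw [intervalIntegral.integral_comp_mul_left _ h2πr, integral_sin, mul_one, mul_zero,
      cos_zero, mul_comm, cos_int_mul_two_pi, sub_self, smul_zero]

lemma harmonic_mul_harmonic (A B A' B' θ φ : ℝ) :
    (A * cos θ + B * sin θ) * (A' * cos φ + B' * sin φ) =
      ((A * A' + B * B') * cos (θ - φ) + (A * A' - B * B') * cos (θ + φ) +
        (B * A' - A * B') * sin (θ - φ) + (A * B' + B * A') * sin (θ + φ)) / 2 := by
  rw [cos_sub, cos_add, sin_sub, sin_add]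
  ring

lemma integral_harmonic_mul_harmonic {m m' : ℤ} (hmm' : m + m' ≠ 0) (A B A' B' : ℝ) :
    ∫ x in (0 : ℝ)..1, (A * cos (2 * π * m * x) + B * sin (2 * π * m * x)) *
        (A' * cos (2 * π * m' * x) + B' * sin (2 * π * m' * x)) =
      if m = m' then (A * A' + B * B') / 2 else 0 := by
  have hsub : ∀ x : ℝ, 2 * π * m * x - 2 * π * m' * x = 2 * π * ((m - m' : ℤ) : ℝ) * x := by
    intro x; push_cast; ring
  have hadd : ∀ x : ℝ, 2 * π * m * x + 2 * π * m' * x = 2 * π * ((m + m' : ℤ) : ℝ) * x := by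
    intro x; push_cast; ring
  simp only [harmonic_mul_harmonic, hsub, hadd]
  rw [intervalIntegral.integral_div, intervalIntegral.integral_add, intervalIntegral.integral_add,
    intervalIntegral.integral_add]
  · simp only [intervalIntegral.integral_const_mul, integral_cos_two_pi_int_mul,
      integral_sin_two_pi_int_mul, sub_eq_zero, hmm', if_false]
    split_ifs <;> ring
  all_goals exact Continuous.intervalIntegrable (by fun_prop) _ _

noncomputable def trigCorrelation (d : ℕ) (a b : ℕ → ℝ) (u v : ℕ) : ℝ :=
  ∑ j ∈ Finset.Icc 1 d, ∑ j' ∈ Finset.Icc 1 d,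
    if j * u = j' * v then (a j * a j' + b j * b j') / 2 else 0

lemma integral_trigPoly_mul_trigPoly (d : ℕ) (a b : ℕ → ℝ) {u v : ℕ} (hu : 0 < u) (hv : 0 < v) :
    ∫ x in (0 : ℝ)..1, trigPoly d a b (u * x) * trigPoly d a b (v * x) =
      trigCorrelation d a b u v := by
  simp only [trigPoly, sum_mul_sum]
  rw [intervalIntegral.integral_finsetSum fun _ _ ↦ Continuous.intervalIntegrable (by fun_prop) _ _]
  refine sum_congr rfl fun j hj ↦ ?_
  rw [intervalIntegral.integral_finsetSum fun _ _ ↦ Continuous.intervalIntegrable (by fun_prop) _ _]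
  refine sum_congr rfl fun j' hj' ↦ ?_
  obtain ⟨hj1, -⟩ := Finset.mem_Icc.1 hj
  obtain ⟨hj'1, -⟩ := Finset.mem_Icc.1 hj'
  have := integral_harmonic_mul_harmonic (m := (j * u : ℕ)) (m' := (j' * v : ℕ)) (by positivity)
    (a j) (b j) (a j') (b j')
  simp only [Int.cast_natCast, Nat.cast_inj] at this
  push_cast at this
  rw [← this]
  congr 1 with x
  ring_nf

lemma trigCorrelation_self (d : ℕ) (a b : ℕ → ℝ) {u : ℕ} (hu : 0 < u) :
    trigCorrelation d a b u u = 1 / 2 * ∑ j ∈ Finset.Icc 1 d, (a j ^ 2 + b j ^ 2) := by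
  simp only [trigCorrelation, Nat.mul_right_cancel_iff hu, sum_ite_eq, mul_sum]
  refine sum_congr rfl fun j hj ↦ ?_
  rw [if_pos hj]
  ring

lemma exists_abs_trigCorrelation_le (d : ℕ) (a b : ℕ → ℝ) : ∃ C > 0, ∀ u v : ℕ,
    |trigCorrelation d a b u v| ≤
      C * ∑ j ∈ Finset.Icc 1 d, ∑ j' ∈ Finset.Icc 1 d, if j * u = j' * v then 1 else 0 := by
  obtain ⟨C, hC⟩ := ((Finset.Icc 1 d ×ˢ Finset.Icc 1 d).image
    fun p ↦ |(a p.1 * a p.2 + b p.1 * b p.2) / 2|).bddAbove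
  refine ⟨max C 1, by positivity, fun u v ↦ ?_⟩
  simp only [trigCorrelation, mul_sum, mul_ite, mul_one, mul_zero]
  refine (abs_sum_le_sum_abs _ _).trans (sum_le_sum fun j hj ↦ ?_)
  refine (abs_sum_le_sum_abs _ _).trans (sum_le_sum fun j' hj' ↦ ?_)
  split_ifs
  · exact (hC (mem_image.2 ⟨(j, j'), mem_product.2 ⟨hj, hj'⟩, rfl⟩)).trans (le_max_left _ _)
  · simp

lemma integral_sq_sum_trigPoly {ι : Type*} (d : ℕ) (a b : ℕ → ℝ) (s : Finset ι) (w : ι → ℝ)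
    {n : ι → ℕ} (hn : ∀ k ∈ s, 0 < n k) :
    ∫ x in Ico (0 : ℝ) 1, (∑ k ∈ s, w k * trigPoly d a b (n k * x)) ^ 2 =
      ∑ k ∈ s, ∑ l ∈ s, w k * w l * trigCorrelation d a b (n k) (n l) := by
  have hcont : Continuous (trigPoly d a b) := by unfold trigPoly; fun_prop
  rw [integral_Ico_eq_integral_Ioc, ← intervalIntegral.integral_of_le zero_le_one]
  simp only [sq, sum_mul_sum]
  rw [intervalIntegral.integral_finsetSum fun _ _ ↦ Continuous.intervalIntegrable (by fun_prop) _ _]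
  refine sum_congr rfl fun k hk ↦ ?_
  rw [intervalIntegral.integral_finsetSum fun _ _ ↦ Continuous.intervalIntegrable (by fun_prop) _ _]
  refine sum_congr rfl fun l hl ↦ ?_
  simp only [mul_mul_mul_comm (w k), intervalIntegral.integral_const_mul,
    integral_trigPoly_mul_trigPoly d a b (hn k hk) (hn l hl)]

lemma abs_sum_sum_sub_diag_le {ι : Type*} [DecidableEq ι] (s : Finset ι) {w : ι → ℝ}
    (hw : ∀ k ∈ s, 0 ≤ w k) {W E : ι → ι → ℝ} {T : ℝ} (hdiag : ∀ k ∈ s, W k k = T)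
    (hoff : ∀ k ∈ s, ∀ l ∈ s, k ≠ l → |W k l| ≤ E k l) :
    |∑ k ∈ s, ∑ l ∈ s, w k * w l * W k l - T * ∑ k ∈ s, w k ^ 2| ≤
      ∑ k ∈ s, ∑ l ∈ s, if k = l then 0 else w k * w l * E k l := by
  have hsplit : ∑ k ∈ s, ∑ l ∈ s, w k * w l * W k l - T * ∑ k ∈ s, w k ^ 2 =
      ∑ k ∈ s, ∑ l ∈ s, if k = l then 0 else w k * w l * W k l := by
    rw [mul_sum, ← sum_sub_distrib]
    refine sum_congr rfl fun k hk ↦ ?_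
    rw [sum_ite, sum_const_zero, zero_add, filter_ne, sum_erase_eq_sub hk, hdiag k hk]
    ring
  rw [hsplit]
  refine (abs_sum_le_sum_abs _ _).trans (sum_le_sum fun k hk ↦ ?_)
  refine (abs_sum_le_sum_abs _ _).trans (sum_le_sum fun l hl ↦ ?_)
  split_ifs with hkl
  · simp
  · rw [abs_mul, abs_of_nonneg (mul_nonneg (hw k hk) (hw l hl))]
    exact mul_le_mul_of_nonneg_left (hoff k hk l hl hkl) (mul_nonneg (hw k hk) (hw l hl))

lemma tendsto_div_of_sub_isLittleO {α : Type*} {l : Filter α} {Q h : α → ℝ} {T : ℝ}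
    (hQ : (fun x ↦ Q x - T * h x) =o[l] h) (hh : ∀ᶠ x in l, h x ≠ 0) :
    Tendsto (fun x ↦ Q x / h x) l (𝓝 T) := by
  have := hQ.tendsto_div_nhds_zero.const_add T
  rw [add_zero] at this
  refine this.congr' (hh.mono fun x hx ↦ ?_)
  field_simp
  ring

lemma sum_offDiag_resonance_eq {ι : Type*} [DecidableEq ι] (d : ℕ) (n : ι → ℕ) (w : ι → ℝ) (C : ℝ)
    (s : Finset ι) :
    ∑ k ∈ s, ∑ l ∈ s, (if k = l then 0 else w k * w l *
        (C * ∑ j ∈ Finset.Icc 1 d, ∑ j' ∈ Finset.Icc 1 d, if j * n k = j' * n l then 1 else 0)) =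
      C * ∑ k ∈ s, ∑ l ∈ s, ∑ j ∈ Finset.Icc 1 d, ∑ j' ∈ Finset.Icc 1 d,
        w k * w l * (if k ≠ l ∧ (j : ℤ) * n k - (j' : ℤ) * n l = 0 then 1 else 0) := by
  simp only [mul_sum]
  refine sum_congr rfl fun k _ ↦ sum_congr rfl fun l _ ↦ ?_
  split_ifs with hkl
  · simp [hkl]
  · refine sum_congr rfl fun j _ ↦ sum_congr rfl fun j' _ ↦ ?_
    simp only [hkl, ne_eq, not_false_eq_true, true_and, sub_eq_zero]
    norm_cast
    ring

theorem variance_asymptotics_general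
    (n : ℕ → ℕ) (c : ℕ → ℕ → ℝ)
    (hpos : ∀ k, 0 < n k)
    -- Assumption (A2)
    (hc0 : ∀ N k, 0 ≤ c N k)
    (hh : Tendsto (fun N => ∑ k ∈ Finset.Icc 1 N, c N k ^ 2) atTop atTop)
    -- ... together with the homogeneous (off-diagonal) part
    (hhom : ∀ d : ℕ, ∀ ε : ℝ, 0 < ε → ∀ᶠ N in atTop,
      ∑ k ∈ Finset.Icc 1 N, ∑ l ∈ Finset.Icc 1 N,
        ∑ j ∈ Finset.Icc 1 d, ∑ j' ∈ Finset.Icc 1 d,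
          c N k * c N l * (if k ≠ l ∧ (j : ℤ) * n k - (j' : ℤ) * n l = 0 then 1 else 0)
      ≤ ε * ∑ k ∈ Finset.Icc 1 N, c N k ^ 2) :
    ∀ (d : ℕ) (a b : ℕ → ℝ),
      Tendsto (fun N =>
          (∫ x in Set.Ico (0:ℝ) 1,
              (∑ k ∈ Finset.Icc 1 N, c N k * trigPoly d a b ((n k : ℝ) * x)) ^ 2) /
            (∑ k ∈ Finset.Icc 1 N, c N k ^ 2))
        atTop (nhds ((1 / 2) * ∑ j ∈ Finset.Icc 1 d, (a j ^ 2 + b j ^ 2))) := by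
  intro d a b
  obtain ⟨C, hC, hcorr⟩ := exists_abs_trigCorrelation_le d a b
  have hbound : ∀ N, |(∫ x in Set.Ico (0:ℝ) 1,
      (∑ k ∈ Finset.Icc 1 N, c N k * trigPoly d a b ((n k : ℝ) * x)) ^ 2) -
        (1 / 2) * (∑ j ∈ Finset.Icc 1 d, (a j ^ 2 + b j ^ 2)) * ∑ k ∈ Finset.Icc 1 N, c N k ^ 2| ≤
      C * ∑ k ∈ Finset.Icc 1 N, ∑ l ∈ Finset.Icc 1 N, ∑ j ∈ Finset.Icc 1 d, ∑ j' ∈ Finset.Icc 1 d,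
        c N k * c N l * (if k ≠ l ∧ (j : ℤ) * n k - (j' : ℤ) * n l = 0 then 1 else 0) := by
    intro N
    rw [integral_sq_sum_trigPoly d a b _ _ fun k _ ↦ hpos k, ← sum_offDiag_resonance_eq]
    exact abs_sum_sum_sub_diag_le _ (fun k _ ↦ hc0 N k)
      (fun k _ ↦ trigCorrelation_self d a b (hpos k)) fun k _ l _ _ ↦ hcorr (n k) (n l)
  refine tendsto_div_of_sub_isLittleO (Asymptotics.isLittleO_iff.2 fun ε hε ↦ ?_)
    ((hh.eventually_gt_atTop 0).mono fun N hN ↦ hN.ne')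
  filter_upwards [hhom d (ε / C) (by positivity)] with N hN
  calc _ ≤ C * (ε / C * ∑ k ∈ Finset.Icc 1 N, c N k ^ 2) :=
        (hbound N).trans (mul_le_mul_of_nonneg_left hN hC.le)
    _ ≤ ε * ‖∑ k ∈ Finset.Icc 1 N, c N k ^ 2‖ := by
        rw [← mul_assoc, mul_div_cancel₀ _ hC.ne']
        exact mul_le_mul_of_nonneg_left (le_abs_self _) hε.le

theorem variance_asymptotics
    (n : ℕ → ℕ) (c : ℕ → ℕ → ℝ)
    (hpos : ∀ k, 0 < n k) (hlac : IsLacunary n)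
    -- Assumption (A2)
    (hc0 : ∀ N k, 0 ≤ c N k) (hc1 : ∀ N k, c N k ≤ 1)
    (hh : Tendsto (fun N => ∑ k ∈ Finset.Icc 1 N, c N k ^ 2) atTop atTop)
    -- Assumption (A4): L*(N,d) = o(h(N)): the inhomogeneous part ...
    (hdio : ∀ d : ℕ, ∀ ε : ℝ, 0 < ε → ∀ᶠ N in atTop, ∀ m : ℕ, 0 < m →
      ∑ k ∈ Finset.Icc 1 N, ∑ l ∈ Finset.Icc 1 N,
        ∑ j ∈ Finset.Icc 1 d, ∑ j' ∈ Finset.Icc 1 d,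
          c N k * c N l * (if (j : ℤ) * n k - (j' : ℤ) * n l = (m : ℤ) then 1 else 0)
      ≤ ε * ∑ k ∈ Finset.Icc 1 N, c N k ^ 2)
    -- ... together with the homogeneous (off-diagonal) part
    (hhom : ∀ d : ℕ, ∀ ε : ℝ, 0 < ε → ∀ᶠ N in atTop,
      ∑ k ∈ Finset.Icc 1 N, ∑ l ∈ Finset.Icc 1 N,
        ∑ j ∈ Finset.Icc 1 d, ∑ j' ∈ Finset.Icc 1 d,
          c N k * c N l * (if k ≠ l ∧ (j : ℤ) * n k - (j' : ℤ) * n l = 0 then 1 else 0)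
      ≤ ε * ∑ k ∈ Finset.Icc 1 N, c N k ^ 2) :
    ∀ (d : ℕ) (a b : ℕ → ℝ),
      Tendsto (fun N =>
          (∫ x in Set.Ico (0:ℝ) 1,
              (∑ k ∈ Finset.Icc 1 N, c N k * trigPoly d a b ((n k : ℝ) * x)) ^ 2) /
            (∑ k ∈ Finset.Icc 1 N, c N k ^ 2))
        atTop (nhds ((1 / 2) * ∑ j ∈ Finset.Icc 1 d, (a j ^ 2 + b j ^ 2))) :=
  variance_asymptotics_general n c hpos hc0 hh hhom
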